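/- Let G be a finite two-player zero-sum game with value v, and let p* = max over (a₁,a₂) of u(a₁,a₂) and p† = min over (a₁,a₂) of u(a₁,a₂). For every ε ∈ (0,1] and every n ≥ 1, the strategy profile in which both players play fixed minimax strategies in the first ⌊n(1-ε)⌋ stages and alternate between fixed pure action profiles a* (achieving p*) and a† (achieving p†) in the remaining ⌈nε⌉ stages is a (c·(⌈nε⌉+1)/n)-Nash equilibrium of the n-stage repeated game of G, where c = (p* - p†)/2. -/

import Mathlib

/-!
On each of the first `⌊n(1-ε)⌋` stages the opponent plays a minimax strategy, so a deviator
gets at most what the profile gives him, namely `v` (resp. `-v`). In the alternating phase every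
outcome lies between `p†` and `p*`, and the profile gives each player his best outcome on every
other stage; a deviator can therefore gain at most `p* - p†` on each remaining stage, and since
`⌊n(1-ε)⌋ + ⌈nε⌉ ≥ n` there are at most `(⌈nε⌉ + 1) / 2` of those. The expected total payoff
obeys a backward recursion (`totalPay`), through which these stagewise bounds add up.
-/

/-- A mixed strategy over a finite action set. -/
def IsMixed {α : Type} [Fintype α] (σ : α → ℝ) : Prop :=
  (∀ a, 0 ≤ σ a) ∧ ∑ a, σ a = 1

/-- The pure (point-mass) strategy on action `a`. -/
def pureS {α : Type} [DecidableEq α] (a : α) : α → ℝ := fun b => if b = a then 1 else 0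

/-- Expected payoff in a two-player game under a mixed strategy profile. -/
def expU2 {A1 A2 : Type} [Fintype A1] [Fintype A2] (u : A1 → A2 → ℝ)
    (σ₁ : A1 → ℝ) (σ₂ : A2 → ℝ) : ℝ :=
  ∑ a, ∑ b, σ₁ a * σ₂ b * u a b

/-- Nash equilibrium of the two-player game with payoffs `u1` (row) and `u2` (column). -/
def IsNash2 {A1 A2 : Type} [Fintype A1] [Fintype A2] (u1 u2 : A1 → A2 → ℝ)
    (σ₁ : A1 → ℝ) (σ₂ : A2 → ℝ) : Prop :=
  IsMixed σ₁ ∧ IsMixed σ₂ ∧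
  (∀ τ, IsMixed τ → expU2 u1 τ σ₂ ≤ expU2 u1 σ₁ σ₂) ∧
  (∀ τ, IsMixed τ → expU2 u2 σ₁ τ ≤ expU2 u2 σ₁ σ₂)

/-- `v` is the minmax payoff of the row player: the least payoff the column player can
force on the row player (who best-responds with a pure action). -/
def RowMinmax {A1 A2 : Type} [Fintype A1] [Fintype A2] [Nonempty A1]
    (u1 : A1 → A2 → ℝ) (v : ℝ) : Prop :=
  IsLeast {x : ℝ | ∃ σ₂ : A2 → ℝ, IsMixed σ₂ ∧
    x = Finset.univ.sup' Finset.univ_nonempty (fun a₁ : A1 => ∑ b, σ₂ b * u1 a₁ b)} v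

/-- `v` is the minmax payoff of the column player. -/
def ColMinmax {A1 A2 : Type} [Fintype A1] [Fintype A2] [Nonempty A2]
    (u2 : A1 → A2 → ℝ) (v : ℝ) : Prop :=
  IsLeast {x : ℝ | ∃ σ₁ : A1 → ℝ, IsMixed σ₁ ∧
    x = Finset.univ.sup' Finset.univ_nonempty (fun a₂ : A2 => ∑ a, σ₁ a * u2 a a₂)} v

/-- Probability that, starting from history `h`, play under the behavioral profile
`(σ₁, σ₂)` follows exactly the sequence of action profiles `l`. -/
def hp2 {A1 A2 : Type} (σ₁ : List (A1 × A2) → A1 → ℝ) (σ₂ : List (A1 × A2) → A2 → ℝ) :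
    List (A1 × A2) → List (A1 × A2) → ℝ
  | _, [] => 1
  | h, a :: rest => σ₁ h a.1 * σ₂ h a.2 * hp2 σ₁ σ₂ (h ++ [a]) rest

/-- Expected average payoff (with stage payoff `u`) in the `n`-stage repeated game. -/
noncomputable def avgPay2 {A1 A2 : Type} [Fintype A1] [Fintype A2] (n : ℕ)
    (u : A1 → A2 → ℝ) (σ₁ : List (A1 × A2) → A1 → ℝ) (σ₂ : List (A1 × A2) → A2 → ℝ) : ℝ :=
  ∑ f : Fin n → A1 × A2, hp2 σ₁ σ₂ [] (List.ofFn f) * ((∑ t, u (f t).1 (f t).2) / n)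

/-- ε-Nash equilibrium of the `n`-stage repeated two-player game with stage payoffs
`u1` (row) and `u2` (column), behavioral strategies and average payoffs. -/
def IsEpsRepNash2 {A1 A2 : Type} [Fintype A1] [Fintype A2] (n : ℕ) (ε : ℝ)
    (u1 u2 : A1 → A2 → ℝ)
    (σ₁ : List (A1 × A2) → A1 → ℝ) (σ₂ : List (A1 × A2) → A2 → ℝ) : Prop :=
  (∀ h, IsMixed (σ₁ h)) ∧ (∀ h, IsMixed (σ₂ h)) ∧
  (∀ τ, (∀ h, IsMixed (τ h)) → avgPay2 n u1 τ σ₂ ≤ avgPay2 n u1 σ₁ σ₂ + ε) ∧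
  (∀ τ, (∀ h, IsMixed (τ h)) → avgPay2 n u2 σ₁ τ ≤ avgPay2 n u2 σ₁ σ₂ + ε)

/-- Nash equilibrium of the `n`-stage repeated two-player game. -/
def IsRepNash2 {A1 A2 : Type} [Fintype A1] [Fintype A2] (n : ℕ)
    (u1 u2 : A1 → A2 → ℝ)
    (σ₁ : List (A1 × A2) → A1 → ℝ) (σ₂ : List (A1 × A2) → A2 → ℝ) : Prop :=
  (∀ h, IsMixed (σ₁ h)) ∧ (∀ h, IsMixed (σ₂ h)) ∧
  (∀ τ, (∀ h, IsMixed (τ h)) → avgPay2 n u1 τ σ₂ ≤ avgPay2 n u1 σ₁ σ₂) ∧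
  (∀ τ, (∀ h, IsMixed (τ h)) → avgPay2 n u2 σ₁ τ ≤ avgPay2 n u2 σ₁ σ₂)

/-- Shannon entropy (base 2) of a mixed strategy, with the convention 0·log 0 = 0. -/
noncomputable def ent {α : Type} [Fintype α] (σ : α → ℝ) : ℝ :=
  ∑ a, -(σ a * Real.logb 2 (σ a))

/-- Shannon entropy of a behavioral strategy in the `n`-stage repeated two-player game:
the maximum over terminal histories of the summed stage entropies along the prefixes. -/
noncomputable def repEnt2 {A1 A2 α : Type} [Fintype A1] [Fintype A2] [Fintype α]
    [Nonempty A1] [Nonempty A2] (n : ℕ) (σ : List (A1 × A2) → α → ℝ) : ℝ :=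
  Finset.univ.sup' Finset.univ_nonempty
    (fun f : Fin n → A1 × A2 => ∑ t : Fin n, ent (σ ((List.ofFn f).take t)))

open Finset

def schedule {β : Type} (m : ℕ) (first even odd : β) (t : ℕ) : β :=
  if t < m then first else if (t - m) % 2 = 0 then even else odd

lemma schedule_rec {β : Type} {P : β → Prop} {m : ℕ} {first even odd : β}
    (hf : P first) (he : P even) (ho : P odd) (t : ℕ) : P (schedule m first even odd t) := by
  unfold schedule
  split_ifs <;> assumption

lemma schedule_map₂ {β γ δ : Type} (f : β → γ → δ) (m : ℕ) (a x y : β) (a' x' y' : γ)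
    (t : ℕ) :
    f (schedule m a x y t) (schedule m a' x' y' t) = schedule m (f a a') (f x x') (f y y') t := by
  unfold schedule
  split_ifs <;> rfl

lemma schedule_of_lt {β : Type} {m t : ℕ} (first even odd : β) (ht : t < m) :
    schedule m first even odd t = first :=
  if_pos ht

lemma schedule_add {β : Type} (m k : ℕ) (first even odd : β) :
    schedule m first even odd (m + k) = if k % 2 = 0 then even else odd := by
  simp [schedule]

lemma sum_range_schedule_zero (m N : ℕ) (x y : ℝ) :
    ∑ t ∈ range N, schedule m 0 x y t = ∑ k ∈ range (N - m), if k % 2 = 0 then x else y := by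
  rcases le_total m N with hmN | hNm
  · obtain ⟨j, rfl⟩ := Nat.exists_eq_add_of_le hmN
    rw [sum_range_add, sum_eq_zero fun t ht => schedule_of_lt _ _ _ (mem_range.1 ht),
      Nat.add_sub_cancel_left, zero_add]
    simp only [schedule_add]
  · rw [Nat.sub_eq_zero_of_le hNm, range_zero, sum_empty]
    exact sum_eq_zero fun t ht => schedule_of_lt _ _ _ ((mem_range.1 ht).trans_le hNm)

lemma sum_range_ite_mod_two_le {x y : ℝ} (hx : 0 ≤ x) (hy : 0 ≤ y) :
    ∀ N : ℕ, ∑ k ∈ range N, (if k % 2 = 0 then x else y) ≤ (x + y) * (N + 1) / 2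
  | 0 => by norm_num; linarith
  | 1 => by norm_num; linarith
  | N + 2 => by
    have ih := sum_range_ite_mod_two_le hx hy N
    rw [sum_range_succ, sum_range_succ]
    have hstep :
        (if N % 2 = 0 then x else y) + (if (N + 1) % 2 = 0 then x else y) = x + y := by
      split_ifs <;> first | omega | ring
    push_cast
    linarith

lemma sub_floor_mul_one_sub_le_ceil (n : ℕ) (ε : ℝ) :
    n - ⌊(n : ℝ) * (1 - ε)⌋₊ ≤ ⌈(n : ℝ) * ε⌉₊ := by
  by_cases hK : ⌈(n : ℝ) * ε⌉₊ ≤ n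
  · have : ((n - ⌈(n : ℝ) * ε⌉₊ : ℕ) : ℝ) ≤ (n : ℝ) * (1 - ε) := by
      rw [Nat.cast_sub hK, mul_one_sub]
      linarith [Nat.le_ceil ((n : ℝ) * ε)]
    have := Nat.le_floor this
    omega
  · omega

lemma sum_range_schedule_div_le {x y : ℝ} (hx : 0 ≤ x) (hy : 0 ≤ y) (n : ℕ) (ε : ℝ) :
    (∑ t ∈ range n, schedule ⌊(n : ℝ) * (1 - ε)⌋₊ 0 x y t) / n
      ≤ (x + y) / 2 * ((⌈(n : ℝ) * ε⌉₊ + 1) / n) := by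
  rw [← mul_div_assoc]
  gcongr
  rw [sum_range_schedule_zero]
  refine (sum_range_ite_mod_two_le hx hy _).trans ?_
  have : ((n - ⌊(n : ℝ) * (1 - ε)⌋₊ : ℕ) : ℝ) ≤ ⌈(n : ℝ) * ε⌉₊ := by
    exact_mod_cast sub_floor_mul_one_sub_le_ceil n ε
  rw [mul_div_right_comm]
  gcongr

lemma IsMixed.sum_mul_le {ι : Type} [Fintype ι] {w : ι → ℝ} (hw : IsMixed w) {f : ι → ℝ}
    {c : ℝ} (hf : ∀ i, f i ≤ c) : ∑ i, w i * f i ≤ c :=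
  calc ∑ i, w i * f i ≤ ∑ i, w i * c :=
        sum_le_sum fun i _ => mul_le_mul_of_nonneg_left (hf i) (hw.1 i)
    _ = c := by rw [← sum_mul, hw.2, one_mul]

lemma IsMixed.le_sum_mul {ι : Type} [Fintype ι] {w : ι → ℝ} (hw : IsMixed w) {f : ι → ℝ}
    {c : ℝ} (hf : ∀ i, c ≤ f i) : c ≤ ∑ i, w i * f i := by
  simpa only [mul_neg, sum_neg_distrib, neg_le_neg_iff] using
    hw.sum_mul_le fun i => neg_le_neg (hf i)

lemma IsMixed.prod {α β : Type} [Fintype α] [Fintype β] {σ : α → ℝ} {τ : β → ℝ}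
    (hσ : IsMixed σ) (hτ : IsMixed τ) : IsMixed fun a : α × β => σ a.1 * τ a.2 :=
  ⟨fun a => mul_nonneg (hσ.1 a.1) (hτ.1 a.2), by
    rw [Fintype.sum_prod_type, ← sum_mul_sum, hσ.2, hτ.2, mul_one]⟩

lemma isMixed_pureS {α : Type} [Fintype α] [DecidableEq α] (a : α) : IsMixed (pureS a) :=
  ⟨fun b => by unfold pureS; split_ifs <;> norm_num, by simp [pureS]⟩

lemma sum_pureS_mul {α : Type} [Fintype α] [DecidableEq α] (a : α) (f : α → ℝ) :
    ∑ b, pureS a b * f b = f a := by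
  simp [pureS]

section OneShot

variable {A1 A2 : Type} [Fintype A1] [Fintype A2]

lemma expU2_eq_sum_prod (u : A1 → A2 → ℝ) (σ₁ : A1 → ℝ) (σ₂ : A2 → ℝ) :
    expU2 u σ₁ σ₂ = ∑ a : A1 × A2, σ₁ a.1 * σ₂ a.2 * u a.1 a.2 := by
  rw [expU2, Fintype.sum_prod_type]

lemma expU2_eq_sum_row (u : A1 → A2 → ℝ) (σ₁ : A1 → ℝ) (σ₂ : A2 → ℝ) :
    expU2 u σ₁ σ₂ = ∑ a, σ₁ a * ∑ b, σ₂ b * u a b := by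
  simp only [expU2, mul_sum, mul_assoc]

lemma expU2_eq_sum_col (u : A1 → A2 → ℝ) (σ₁ : A1 → ℝ) (σ₂ : A2 → ℝ) :
    expU2 u σ₁ σ₂ = ∑ b, σ₂ b * ∑ a, σ₁ a * u a b := by
  rw [expU2, sum_comm]
  simp only [mul_sum, mul_left_comm, mul_assoc]

lemma expU2_pureS_pureS [DecidableEq A1] [DecidableEq A2] (u : A1 → A2 → ℝ) (a : A1)
    (b : A2) :
    expU2 u (pureS a) (pureS b) = u a b := by
  rw [expU2_eq_sum_row, sum_pureS_mul, sum_pureS_mul]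

lemma expU2_neg (u : A1 → A2 → ℝ) (σ₁ : A1 → ℝ) (σ₂ : A2 → ℝ) :
    expU2 (fun a b => -u a b) σ₁ σ₂ = -expU2 u σ₁ σ₂ := by
  simp only [expU2, mul_neg, sum_neg_distrib]

lemma expU2_eq_of_minimax {u : A1 → A2 → ℝ} {v : ℝ} {μ₁ : A1 → ℝ} {μ₂ : A2 → ℝ}
    (hμ₁ : IsMixed μ₁ ∧ ∀ b, v ≤ ∑ a, μ₁ a * u a b)
    (hμ₂ : IsMixed μ₂ ∧ ∀ a, ∑ b, μ₂ b * u a b ≤ v) : expU2 u μ₁ μ₂ = v :=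
  le_antisymm (by rw [expU2_eq_sum_row]; exact hμ₁.1.sum_mul_le hμ₂.2)
    (by rw [expU2_eq_sum_col]; exact hμ₂.1.le_sum_mul hμ₁.2)

end OneShot

section Repeated

variable {A1 A2 : Type} [Fintype A1] [Fintype A2]

/-- Expected total payoff of the next `n` stages after history `h`. -/
noncomputable def totalPay (u : A1 → A2 → ℝ) (σ₁ : List (A1 × A2) → A1 → ℝ)
    (σ₂ : List (A1 × A2) → A2 → ℝ) : ℕ → List (A1 × A2) → ℝ
  | 0, _ => 0
  | n + 1, h =>
    ∑ a : A1 × A2, σ₁ h a.1 * σ₂ h a.2 * (u a.1 a.2 + totalPay u σ₁ σ₂ n (h ++ [a]))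

variable {u : A1 → A2 → ℝ} {σ₁ : List (A1 × A2) → A1 → ℝ} {σ₂ : List (A1 × A2) → A2 → ℝ}

lemma sum_pi_fin_succ {α : Type} [Fintype α] {n : ℕ} (F : (Fin (n + 1) → α) → ℝ) :
    ∑ f, F f = ∑ a, ∑ g : Fin n → α, F (Fin.cons a g) := by
  rw [← (Fin.consEquiv fun _ => α).sum_comp F, Fintype.sum_prod_type]
  rfl

lemma sum_hp2_ofFn (hσ₁ : ∀ h, IsMixed (σ₁ h)) (hσ₂ : ∀ h, IsMixed (σ₂ h)) :
    ∀ (n : ℕ) (h : List (A1 × A2)), ∑ f : Fin n → A1 × A2, hp2 σ₁ σ₂ h (List.ofFn f) = 1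
  | 0, h => by simp [hp2]
  | n + 1, h => by
    simp only [sum_pi_fin_succ, List.ofFn_cons, hp2, ← mul_sum, sum_hp2_ofFn hσ₁ hσ₂ n,
      mul_one]
    exact ((hσ₁ h).prod (hσ₂ h)).2

lemma sum_hp2_ofFn_mul_sum (hσ₁ : ∀ h, IsMixed (σ₁ h)) (hσ₂ : ∀ h, IsMixed (σ₂ h)) :
    ∀ (n : ℕ) (h : List (A1 × A2)),
      ∑ f : Fin n → A1 × A2, hp2 σ₁ σ₂ h (List.ofFn f) * ∑ t, u (f t).1 (f t).2
        = totalPay u σ₁ σ₂ n h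
  | 0, h => by simp [totalPay]
  | n + 1, h => by
    simp only [sum_pi_fin_succ, List.ofFn_cons, hp2, Fin.sum_univ_succ, Fin.cons_zero,
      Fin.cons_succ, totalPay]
    refine sum_congr rfl fun a _ => ?_
    rw [← sum_hp2_ofFn_mul_sum hσ₁ hσ₂ n, mul_add, add_comm]
    simp only [mul_add, sum_add_distrib, ← sum_mul, mul_assoc, ← mul_sum,
      sum_hp2_ofFn hσ₁ hσ₂ n]
    ring

lemma avgPay2_eq_totalPay_div (hσ₁ : ∀ h, IsMixed (σ₁ h)) (hσ₂ : ∀ h, IsMixed (σ₂ h))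
    (n : ℕ) :
    avgPay2 n u σ₁ σ₂ = totalPay u σ₁ σ₂ n [] / n := by
  rw [← sum_hp2_ofFn_mul_sum hσ₁ hσ₂, avgPay2, sum_div]
  simp only [mul_div_assoc]

lemma totalPay_succ (n : ℕ) (h : List (A1 × A2)) :
    totalPay u σ₁ σ₂ (n + 1) h
      = expU2 u (σ₁ h) (σ₂ h)
        + ∑ a : A1 × A2, σ₁ h a.1 * σ₂ h a.2 * totalPay u σ₁ σ₂ n (h ++ [a]) := by
  simp only [totalPay, mul_add, sum_add_distrib, expU2_eq_sum_prod]

lemma totalPay_neg (n : ℕ) (h : List (A1 × A2)) :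
    totalPay (fun a b => -u a b) σ₁ σ₂ n h = -totalPay u σ₁ σ₂ n h := by
  induction n generalizing h with
  | zero => simp [totalPay]
  | succ n ih => simp only [totalPay_succ, expU2_neg, ih, mul_neg, sum_neg_distrib, neg_add]

lemma totalPay_le_sum (hσ₁ : ∀ h, IsMixed (σ₁ h)) (hσ₂ : ∀ h, IsMixed (σ₂ h)) {B : ℕ → ℝ}
    (hB : ∀ h, expU2 u (σ₁ h) (σ₂ h) ≤ B h.length) (n : ℕ) (h : List (A1 × A2)) :
    totalPay u σ₁ σ₂ n h ≤ ∑ i ∈ range n, B (h.length + i) := by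
  induction n generalizing h with
  | zero => simp [totalPay]
  | succ n ih =>
    have hcont : ∑ a : A1 × A2, σ₁ h a.1 * σ₂ h a.2 * totalPay u σ₁ σ₂ n (h ++ [a])
        ≤ ∑ i ∈ range n, B (h.length + (i + 1)) :=
      ((hσ₁ h).prod (hσ₂ h)).sum_mul_le fun a => by
        simpa only [List.length_append, List.length_singleton, add_right_comm _ 1, add_assoc]
          using ih (h ++ [a])
    rw [totalPay_succ, sum_range_succ', add_zero, add_comm (∑ i ∈ range n, _)]
    exact add_le_add (hB h) hcont

lemma sum_le_totalPay (hσ₁ : ∀ h, IsMixed (σ₁ h)) (hσ₂ : ∀ h, IsMixed (σ₂ h)) {B : ℕ → ℝ}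
    (hB : ∀ h, B h.length ≤ expU2 u (σ₁ h) (σ₂ h)) (n : ℕ) (h : List (A1 × A2)) :
    ∑ i ∈ range n, B (h.length + i) ≤ totalPay u σ₁ σ₂ n h := by
  have := totalPay_le_sum (u := fun a b => -u a b) hσ₁ hσ₂ (B := fun t => -B t)
    (fun h => by rw [expU2_neg]; exact neg_le_neg (hB h)) n h
  rw [totalPay_neg, sum_neg_distrib] at this
  exact neg_le_neg_iff.1 this

theorem avgPay2_le_add_of_stage {τ₁ : List (A1 × A2) → A1 → ℝ}
    {τ₂ : List (A1 × A2) → A2 → ℝ} (hσ₁ : ∀ h, IsMixed (σ₁ h)) (hσ₂ : ∀ h, IsMixed (σ₂ h))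
    (hτ₁ : ∀ h, IsMixed (τ₁ h)) (hτ₂ : ∀ h, IsMixed (τ₂ h)) {g d : ℕ → ℝ}
    (hσ : ∀ h, g h.length ≤ expU2 u (σ₁ h) (σ₂ h))
    (hτ : ∀ h, expU2 u (τ₁ h) (τ₂ h) ≤ g h.length + d h.length) (n : ℕ) :
    avgPay2 n u τ₁ τ₂ ≤ avgPay2 n u σ₁ σ₂ + (∑ t ∈ range n, d t) / n := by
  have hup := totalPay_le_sum hτ₁ hτ₂ (B := fun t => g t + d t) hτ n []
  have hlow := sum_le_totalPay hσ₁ hσ₂ hσ n []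
  simp only [List.length_nil, zero_add, sum_add_distrib] at hup hlow
  rw [avgPay2_eq_totalPay_div hτ₁ hτ₂, avgPay2_eq_totalPay_div hσ₁ hσ₂, ← add_div]
  gcongr
  linarith

end Repeated

section Profile

variable {A1 A2 : Type} [Fintype A1] [Fintype A2] {u : A1 → A2 → ℝ} {v : ℝ} {μ₁ : A1 → ℝ}
  {μ₂ : A2 → ℝ} {astar adag : A1 × A2}

lemma expU2_le_schedule_of_row_deviation [DecidableEq A2]
    (hμ₂ : ∀ a, ∑ b, μ₂ b * u a b ≤ v) (hstar : ∀ a b, u a b ≤ u astar.1 astar.2)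
    {τ : A1 → ℝ} (hτ : IsMixed τ) (m t : ℕ) :
    expU2 u τ (schedule m μ₂ (pureS astar.2) (pureS adag.2) t)
      ≤ schedule m v (u astar.1 astar.2) (u adag.1 adag.2) t
        + schedule m 0 0 (u astar.1 astar.2 - u adag.1 adag.2) t := by
  rw [expU2_eq_sum_row]
  unfold schedule
  split_ifs <;> simp only [sum_pureS_mul, add_zero, add_sub_cancel] <;>
    exact hτ.sum_mul_le fun a => by first | exact hμ₂ a | exact hstar _ _

lemma expU2_neg_le_schedule_of_column_deviation [DecidableEq A1]
    (hμ₁ : ∀ b, v ≤ ∑ a, μ₁ a * u a b) (hdag : ∀ a b, u adag.1 adag.2 ≤ u a b)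
    {τ : A2 → ℝ} (hτ : IsMixed τ) (m t : ℕ) :
    expU2 (fun a b => -u a b) (schedule m μ₁ (pureS astar.1) (pureS adag.1) t) τ
      ≤ -schedule m v (u astar.1 astar.2) (u adag.1 adag.2) t
        + schedule m 0 (u astar.1 astar.2 - u adag.1 adag.2) 0 t := by
  rw [expU2_neg, neg_le, expU2_eq_sum_col]
  unfold schedule
  split_ifs <;>
    simp only [sum_pureS_mul, add_zero, neg_add, neg_neg, neg_sub, add_sub_cancel] <;>
    exact hτ.le_sum_mul fun b => by first | exact hμ₁ b | exact hdag _ _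

end Profile

theorem stmt_14_general {A1 A2 : Type} [Fintype A1] [Fintype A2]
    [DecidableEq A1] [DecidableEq A2]
    (u : A1 → A2 → ℝ) (v : ℝ)
    -- μ₁ and μ₂ are minimax (optimal) strategies guaranteeing the value v
    (μ₁ : A1 → ℝ) (μ₂ : A2 → ℝ)
    (hμ₁ : IsMixed μ₁ ∧ ∀ b, v ≤ ∑ a, μ₁ a * u a b)
    (hμ₂ : IsMixed μ₂ ∧ ∀ a, ∑ b, μ₂ b * u a b ≤ v)
    -- a* attains the maximal payoff p*, a† attains the minimal payoff p†
    (astar adag : A1 × A2)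
    (hstar : ∀ a b, u a b ≤ u astar.1 astar.2)
    (hdag : ∀ a b, u adag.1 adag.2 ≤ u a b)
    (ε : ℝ) (n : ℕ) :
    IsEpsRepNash2 n
      ((u astar.1 astar.2 - u adag.1 adag.2) / 2 * ((⌈(n : ℝ) * ε⌉₊ + 1) / n))
      u (fun a b => -(u a b))
      (fun h => if h.length < ⌊(n : ℝ) * (1 - ε)⌋₊ then μ₁
        else if (h.length - ⌊(n : ℝ) * (1 - ε)⌋₊) % 2 = 0 then pureS astar.1
        else pureS adag.1)
      (fun h => if h.length < ⌊(n : ℝ) * (1 - ε)⌋₊ then μ₂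
        else if (h.length - ⌊(n : ℝ) * (1 - ε)⌋₊) % 2 = 0 then pureS astar.2
        else pureS adag.2) := by
  set m := ⌊(n : ℝ) * (1 - ε)⌋₊
  have hgap : 0 ≤ u astar.1 astar.2 - u adag.1 adag.2 := sub_nonneg.2 (hdag _ _)
  change IsEpsRepNash2 n _ u _ (fun h => schedule m μ₁ (pureS astar.1) (pureS adag.1) h.length)
    (fun h => schedule m μ₂ (pureS astar.2) (pureS adag.2) h.length)
  have hσ₁ (h : List (A1 × A2)) :=
    schedule_rec hμ₁.1 (isMixed_pureS astar.1) (isMixed_pureS adag.1) (m := m) h.length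
  have hσ₂ (h : List (A1 × A2)) :=
    schedule_rec hμ₂.1 (isMixed_pureS astar.2) (isMixed_pureS adag.2) (m := m) h.length
  have hpay (t : ℕ) : expU2 u (schedule m μ₁ (pureS astar.1) (pureS adag.1) t)
      (schedule m μ₂ (pureS astar.2) (pureS adag.2) t)
        = schedule m v (u astar.1 astar.2) (u adag.1 adag.2) t := by
    rw [schedule_map₂ (expU2 u), expU2_eq_of_minimax hμ₁ hμ₂, expU2_pureS_pureS,
      expU2_pureS_pureS]
  refine ⟨hσ₁, hσ₂, fun τ hτ => ?_, fun τ hτ => ?_⟩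
  · calc _ ≤ _ := avgPay2_le_add_of_stage hσ₁ hσ₂ hτ hσ₂ (fun h => (hpay _).ge)
          (fun h => expU2_le_schedule_of_row_deviation hμ₂.2 hstar (hτ h) m h.length) n
      _ ≤ _ := by
        gcongr
        simpa only [zero_add] using sum_range_schedule_div_le le_rfl hgap n ε
  · calc _ ≤ _ := avgPay2_le_add_of_stage hσ₁ hσ₂ hσ₁ hτ
          (g := fun t => -schedule m v (u astar.1 astar.2) (u adag.1 adag.2) t)
          (fun h => by rw [expU2_neg, hpay])
          (fun h => expU2_neg_le_schedule_of_column_deviation hμ₁.2 hdag (hτ h) m h.length) n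
      _ ≤ _ := by
        gcongr
        simpa only [add_zero] using sum_range_schedule_div_le hgap le_rfl n ε

theorem stmt_14 {A1 A2 : Type} [Fintype A1] [Fintype A2] [Nonempty A1] [Nonempty A2]
    [DecidableEq A1] [DecidableEq A2]
    (u : A1 → A2 → ℝ) (v : ℝ)
    -- μ₁ and μ₂ are minimax (optimal) strategies guaranteeing the value v
    (μ₁ : A1 → ℝ) (μ₂ : A2 → ℝ)
    (hμ₁ : IsMixed μ₁ ∧ ∀ b, v ≤ ∑ a, μ₁ a * u a b)
    (hμ₂ : IsMixed μ₂ ∧ ∀ a, ∑ b, μ₂ b * u a b ≤ v)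
    -- a* attains the maximal payoff p*, a† attains the minimal payoff p†
    (astar adag : A1 × A2)
    (hstar : ∀ a b, u a b ≤ u astar.1 astar.2)
    (hdag : ∀ a b, u adag.1 adag.2 ≤ u a b)
    (ε : ℝ) (hε0 : 0 < ε) (hε1 : ε ≤ 1) (n : ℕ) (hn : 1 ≤ n) :
    IsEpsRepNash2 n
      ((u astar.1 astar.2 - u adag.1 adag.2) / 2 * ((⌈(n : ℝ) * ε⌉₊ + 1) / n))
      u (fun a b => -(u a b))
      (fun h => if h.length < ⌊(n : ℝ) * (1 - ε)⌋₊ then μ₁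
        else if (h.length - ⌊(n : ℝ) * (1 - ε)⌋₊) % 2 = 0 then pureS astar.1
        else pureS adag.1)
      (fun h => if h.length < ⌊(n : ℝ) * (1 - ε)⌋₊ then μ₂
        else if (h.length - ⌊(n : ℝ) * (1 - ε)⌋₊) % 2 = 0 then pureS astar.2
        else pureS adag.2) :=
  stmt_14_general u v μ₁ μ₂ hμ₁ hμ₂ astar adag hstar hdag ε n
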